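/- Let D ≥ 1, let Φ : ℝ^D → ℝ be a continuous, integrable function whose Fourier transform F Φ is strictly positive almost everywhere, and let χ_0 = (∏_{i=1}^D l_i)^{-1} · 1_{TR_0} be the normalized indicator of the box TR_0 = ∏_{i=1}^D [-l_i/2, l_i/2] with l_i > 0. Then for every integrable function f : ℝ^D → ℝ, the weighted spectral energy is not increased by convolution with χ_0: ∫_{ℝ^D} |F(f ∗ χ_0)(ω)|² / (F Φ)(ω) dω ≤ ∫_{ℝ^D} |(F f)(ω)|² / (F Φ)(ω) dω (both sides possibly infinite). -/

import Mathlib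

open MeasureTheory
open scoped ENNReal NNReal

/-- The axis-aligned box `∏ i, [-lᵢ/2, lᵢ/2]` centered at the origin in `ℝ^D`. -/
def trustRegion (D : ℕ) (l : Fin D → ℝ) : Set (Fin D → ℝ) :=
  Set.univ.pi fun i => Set.Icc (-(l i) / 2) (l i / 2)

/-- The normalized indicator function `χ₀ = (∏ i, lᵢ)⁻¹ · 1_{TR₀}`. -/
noncomputable def normIndicator (D : ℕ) (l : Fin D → ℝ) : (Fin D → ℝ) → ℝ :=
  Set.indicator (trustRegion D l) fun _ => (∏ i, l i)⁻¹

/-- The Fourier transform `(F f)(ω) = ∫ f(x) exp(-i x·ω) dx` of a function on `ℝ^D`. -/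
noncomputable def fourierTransform (D : ℕ) (f : (Fin D → ℝ) → ℝ) (ω : Fin D → ℝ) : ℂ :=
  ∫ x, (f x : ℂ) * Complex.exp (-Complex.I * ((∑ i, x i * ω i : ℝ) : ℂ))

/-- The convolution `(f ∗ g)(x) = ∫ f(y) g(x - y) dy` of real functions on `ℝ^D`. -/
noncomputable def conv (D : ℕ) (f g : (Fin D → ℝ) → ℝ) (x : Fin D → ℝ) : ℝ :=
  ∫ y, f y * g (x - y)

/-!
By the convolution theorem `F (f ∗ χ₀) = F f · F χ₀`, and `‖F χ₀ ω‖ ≤ ∫ |χ₀| = 1` because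
`χ₀` is a probability density. Hence the integrand on the left is pointwise at most the one on
the right, whatever the weight `F Φ` is.
-/

namespace WeightedSpectralEnergy

variable {D : ℕ}

noncomputable def fourierKernel (ω x : Fin D → ℝ) : ℂ :=
  Complex.exp (-Complex.I * ((∑ i, x i * ω i : ℝ) : ℂ))

lemma fourierTransform_eq_integral_fourierKernel (f : (Fin D → ℝ) → ℝ) (ω : Fin D → ℝ) :
    fourierTransform D f ω = ∫ x, (f x : ℂ) * fourierKernel ω x := rfl

lemma norm_fourierKernel (ω x : Fin D → ℝ) : ‖fourierKernel ω x‖ = 1 := by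
  simp [fourierKernel, Complex.norm_exp]

lemma fourierKernel_add (ω x y : Fin D → ℝ) :
    fourierKernel ω (x + y) = fourierKernel ω x * fourierKernel ω y := by
  simp only [fourierKernel, ← Complex.exp_add, Pi.add_apply, add_mul, Finset.sum_add_distrib]
  push_cast
  ring_nf

lemma continuous_fourierKernel (ω : Fin D → ℝ) : Continuous (fourierKernel ω) := by
  unfold fourierKernel
  fun_prop

lemma norm_fourierTransform_le_integral_abs (f : (Fin D → ℝ) → ℝ) (ω : Fin D → ℝ) :
    ‖fourierTransform D f ω‖ ≤ ∫ x, |f x| := by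
  rw [fourierTransform_eq_integral_fourierKernel]
  refine (norm_integral_le_integral_norm _).trans_eq ?_
  simp only [norm_mul, Complex.norm_real, Real.norm_eq_abs, norm_fourierKernel, mul_one]

lemma integral_translate_mul_fourierKernel (g : (Fin D → ℝ) → ℝ) (ω y : Fin D → ℝ) :
    ∫ x, (g (x - y) : ℂ) * fourierKernel ω x =
      fourierKernel ω y * fourierTransform D g ω := by
  rw [← integral_add_right_eq_self _ y, fourierTransform_eq_integral_fourierKernel,
    ← integral_const_mul]
  simp only [add_sub_cancel_right, fourierKernel_add]
  congr with x
  ring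

theorem fourierTransform_conv {f g : (Fin D → ℝ) → ℝ} (hf : Integrable f)
    (hg : Integrable g) (ω : Fin D → ℝ) :
    fourierTransform D (conv D f g) ω = fourierTransform D f ω * fourierTransform D g ω := by
  have hprod : Integrable (fun p : (Fin D → ℝ) × (Fin D → ℝ) =>
      (f p.2 : ℂ) * ((g (p.1 - p.2) : ℂ) * fourierKernel ω p.1)) (volume.prod volume) := by
    have hconv := (hf.convolution_integrand (.mul ℝ ℝ) hg).ofReal (𝕜 := ℂ)
    refine (hconv.mul_bdd ((continuous_fourierKernel ω).comp continuous_fst).aestronglyMeasurable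
      (c := 1) (.of_forall fun p => (norm_fourierKernel ω p.1).le)).congr (.of_forall fun p => ?_)
    simp only [ContinuousLinearMap.mul_apply', Function.comp_apply,
      RCLike.ofReal_eq_complex_ofReal, Complex.ofReal_mul]
    ring
  calc fourierTransform D (conv D f g) ω
      = ∫ x, ∫ y, (f y : ℂ) * ((g (x - y) : ℂ) * fourierKernel ω x) := by
        rw [fourierTransform_eq_integral_fourierKernel]
        congr with x
        rw [conv, ← integral_complex_ofReal, ← integral_mul_const]
        simp only [Complex.ofReal_mul, mul_assoc]
    _ = ∫ y, ∫ x, (f y : ℂ) * ((g (x - y) : ℂ) * fourierKernel ω x) :=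
        integral_integral_swap hprod
    _ = ∫ y, (f y : ℂ) * fourierKernel ω y * fourierTransform D g ω := by
        simp only [integral_const_mul, integral_translate_mul_fourierKernel, mul_assoc]
    _ = fourierTransform D f ω * fourierTransform D g ω := integral_mul_const _ _

lemma measurableSet_trustRegion (l : Fin D → ℝ) : MeasurableSet (trustRegion D l) :=
  .univ_pi fun _ => measurableSet_Icc

lemma volume_trustRegion {l : Fin D → ℝ} (hl : ∀ i, 0 < l i) :
    volume (trustRegion D l) = ENNReal.ofReal (∏ i, l i) := by
  simp only [trustRegion, volume_pi_pi, Real.volume_Icc, sub_neg_eq_add, neg_div, add_halves]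
  exact (ENNReal.ofReal_prod_of_nonneg fun i _ => (hl i).le).symm

lemma integrable_normIndicator (l : Fin D → ℝ) : Integrable (normIndicator D l) := by
  refine (integrable_indicator_iff (measurableSet_trustRegion l)).2 (integrableOn_const ?_)
  simp only [trustRegion, volume_pi_pi, Real.volume_Icc]
  exact (ENNReal.prod_lt_top fun _ _ => ENNReal.ofReal_lt_top).ne

lemma normIndicator_nonneg {l : Fin D → ℝ} (hl : ∀ i, 0 < l i) (x : Fin D → ℝ) :
    0 ≤ normIndicator D l x :=
  Set.indicator_nonneg (fun _ _ => inv_nonneg.2 (Finset.prod_nonneg fun i _ => (hl i).le)) x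

lemma integral_normIndicator {l : Fin D → ℝ} (hl : ∀ i, 0 < l i) :
    ∫ x, normIndicator D l x = 1 := by
  rw [normIndicator, integral_indicator_const _ (measurableSet_trustRegion l), measureReal_def,
    volume_trustRegion hl, ENNReal.toReal_ofReal (Finset.prod_nonneg fun i _ => (hl i).le),
    smul_eq_mul, mul_inv_cancel₀ (Finset.prod_pos fun i _ => hl i).ne']

lemma norm_fourierTransform_normIndicator_le_one {l : Fin D → ℝ} (hl : ∀ i, 0 < l i)
    (ω : Fin D → ℝ) : ‖fourierTransform D (normIndicator D l) ω‖ ≤ 1 := by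
  have h := norm_fourierTransform_le_integral_abs (normIndicator D l) ω
  simpa only [abs_of_nonneg (normIndicator_nonneg hl _), integral_normIndicator hl] using h

lemma norm_fourierTransform_conv_normIndicator_le {l : Fin D → ℝ} (hl : ∀ i, 0 < l i)
    {f : (Fin D → ℝ) → ℝ} (hf : Integrable f) (ω : Fin D → ℝ) :
    ‖fourierTransform D (conv D f (normIndicator D l)) ω‖ ≤ ‖fourierTransform D f ω‖ := by
  rw [fourierTransform_conv hf (integrable_normIndicator l), norm_mul]
  exact mul_le_of_le_one_right (norm_nonneg _)
    (norm_fourierTransform_normIndicator_le_one hl ω)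

end WeightedSpectralEnergy

theorem weighted_spectral_energy_conv_le_general
    (D : ℕ) (l : Fin D → ℝ) (hl : ∀ i, 0 < l i)
    (Φ : (Fin D → ℝ) → ℝ)
    (f : (Fin D → ℝ) → ℝ) (hf : Integrable f) :
    ∫⁻ ω, (‖fourierTransform D (conv D f (normIndicator D l)) ω‖₊ : ℝ≥0∞) ^ 2 /
        ENNReal.ofReal ((fourierTransform D Φ ω).re)
      ≤ ∫⁻ ω, (‖fourierTransform D f ω‖₊ : ℝ≥0∞) ^ 2 /
        ENNReal.ofReal ((fourierTransform D Φ ω).re) := by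
  refine lintegral_mono fun ω => ENNReal.div_le_div_right (pow_le_pow_left' ?_ 2) _
  exact ENNReal.coe_le_coe.2
    (WeightedSpectralEnergy.norm_fourierTransform_conv_normIndicator_le hl hf ω)

/-- If `Φ` is continuous and integrable with a.e. strictly positive Fourier transform,
then for every integrable `f`, the weighted spectral energy `∫ |F f|² / (F Φ)` is not
increased by convolution with the normalized box indicator `χ₀`. -/
theorem weighted_spectral_energy_conv_le
    (D : ℕ) (hD : 1 ≤ D) (l : Fin D → ℝ) (hl : ∀ i, 0 < l i)
    (Φ : (Fin D → ℝ) → ℝ) (hΦc : Continuous Φ) (hΦi : Integrable Φ)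
    (hFΦ : ∀ᵐ ω ∂(volume), 0 < (fourierTransform D Φ ω).re ∧
      (fourierTransform D Φ ω).im = 0)
    (f : (Fin D → ℝ) → ℝ) (hf : Integrable f) :
    ∫⁻ ω, (‖fourierTransform D (conv D f (normIndicator D l)) ω‖₊ : ℝ≥0∞) ^ 2 /
        ENNReal.ofReal ((fourierTransform D Φ ω).re)
      ≤ ∫⁻ ω, (‖fourierTransform D f ω‖₊ : ℝ≥0∞) ^ 2 /
        ENNReal.ofReal ((fourierTransform D Φ ω).re) :=
  weighted_spectral_energy_conv_le_general D l hl Φ f hf
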